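/- There exist two distinct Borel probability measures γ and γ̄ on ℝ² × ℝ² with the same marginals, both optimal for the Kantorovich problem with cost c(x,y) = e^{x₁+y₁}cos(x₂-y₂) + e^{2x₁}/2 + e^{2y₁}/2; hence optimal plans for this nondegenerate cost need not be unique. -/

import Mathlib

/-!
The cost is `(e^{x₁} - e^{y₁})²/2 + e^{x₁+y₁}(1 + cos(x₂ - y₂)) ≥ 0`, so every transport plan
concentrated on its zero set `{x₁ = y₁, x₂ - y₂ ∈ π + 2πℤ}` is optimal. Pairing the sources
`(0,0), (0,2π)` with the targets `(0,π), (0,3π)` in either order stays inside that zero set,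
which gives two distinct optimal plans with the same marginals.
-/

open MeasureTheory

/-- The cost `c(x,y) = e^{x₁+y₁} cos(x₂-y₂) + e^{2x₁}/2 + e^{2y₁}/2` on `ℝ² × ℝ²`. -/
noncomputable def cylCost (x y : ℝ × ℝ) : ℝ :=
  Real.exp (x.1 + y.1) * Real.cos (x.2 - y.2) + Real.exp (2 * x.1) / 2 + Real.exp (2 * y.1) / 2

section TwoPointMeasure

variable {α β : Type*} [MeasurableSpace α] [MeasurableSpace β]

noncomputable def twoPointMeasure (a b : α) : Measure α :=
  (2⁻¹ : ENNReal) • (Measure.dirac a + Measure.dirac b)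

instance isProbabilityMeasure_twoPointMeasure (a b : α) :
    IsProbabilityMeasure (twoPointMeasure a b) := by
  constructor
  simp only [twoPointMeasure, Measure.smul_apply, Measure.add_apply, measure_univ, smul_eq_mul,
    one_add_one_eq_two]
  exact ENNReal.inv_mul_cancel two_ne_zero ENNReal.ofNat_ne_top

lemma twoPointMeasure_comm (a b : α) : twoPointMeasure a b = twoPointMeasure b a := by
  rw [twoPointMeasure, twoPointMeasure, add_comm]

lemma map_twoPointMeasure {f : α → β} (hf : Measurable f) (a b : α) :
    (twoPointMeasure a b).map f = twoPointMeasure (f a) (f b) := by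
  rw [twoPointMeasure, twoPointMeasure, Measure.map_smul, Measure.map_add _ _ hf,
    Measure.map_dirac' hf, Measure.map_dirac' hf]

lemma ae_twoPointMeasure [MeasurableSingletonClass α] {p : α → Prop} {a b : α}
    (ha : p a) (hb : p b) : ∀ᵐ x ∂twoPointMeasure a b, p x := by
  rw [twoPointMeasure, Measure.ae_ennreal_smul_measure_iff (by norm_num), ae_add_measure_iff,
    ae_dirac_eq, ae_dirac_eq]
  exact ⟨ha, hb⟩

lemma twoPointMeasure_ne [MeasurableSingletonClass α] {a b c d : α} (hc : a ≠ c) (hd : a ≠ d) :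
    twoPointMeasure a b ≠ twoPointMeasure c d := by
  intro h
  have hpos : twoPointMeasure a b {a} ≠ 0 := by
    simp [twoPointMeasure]
  have hzero : twoPointMeasure c d {a} = 0 := by
    simp [twoPointMeasure, hc.symm, hd.symm]
  exact hpos (h ▸ hzero)

lemma map_fst_twoPointMeasure_swap (a₁ a₂ : α) (b₁ b₂ : β) :
    (twoPointMeasure (a₁, b₁) (a₂, b₂)).map Prod.fst =
      (twoPointMeasure (a₁, b₂) (a₂, b₁)).map Prod.fst := by
  rw [map_twoPointMeasure measurable_fst, map_twoPointMeasure measurable_fst]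

lemma map_snd_twoPointMeasure_swap (a₁ a₂ : α) (b₁ b₂ : β) :
    (twoPointMeasure (a₁, b₁) (a₂, b₂)).map Prod.snd =
      (twoPointMeasure (a₁, b₂) (a₂, b₁)).map Prod.snd := by
  rw [map_twoPointMeasure measurable_snd, map_twoPointMeasure measurable_snd,
    twoPointMeasure_comm]

end TwoPointMeasure

lemma integral_le_integral_of_nonneg_of_ae_eq_zero {α : Type*} [MeasurableSpace α]
    {μ : Measure α} {f : α → ℝ} (hf : 0 ≤ f) (hμ : ∀ᵐ x ∂μ, f x = 0) (ν : Measure α) :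
    ∫ x, f x ∂μ ≤ ∫ x, f x ∂ν := by
  rw [integral_eq_zero_of_ae hμ]
  exact integral_nonneg hf

lemma cylCost_eq (x y : ℝ × ℝ) :
    cylCost x y = (Real.exp x.1 - Real.exp y.1) ^ 2 / 2 +
      Real.exp (x.1 + y.1) * (1 + Real.cos (x.2 - y.2)) := by
  have hx : Real.exp (2 * x.1) = Real.exp x.1 ^ 2 := by rw [← Real.exp_nat_mul]; norm_num
  have hy : Real.exp (2 * y.1) = Real.exp y.1 ^ 2 := by rw [← Real.exp_nat_mul]; norm_num
  rw [cylCost, hx, hy, Real.exp_add]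
  ring

lemma cylCost_nonneg (x y : ℝ × ℝ) : 0 ≤ cylCost x y := by
  rw [cylCost_eq]
  have := Real.neg_one_le_cos (x.2 - y.2)
  exact add_nonneg (by positivity) (mul_nonneg (Real.exp_pos _).le (by linarith))

lemma cylCost_eq_zero {x y : ℝ × ℝ} (h₁ : x.1 = y.1) (h₂ : Real.cos (x.2 - y.2) = -1) :
    cylCost x y = 0 := by
  rw [cylCost_eq, h₁, h₂]
  ring

lemma cylCost_eq_zero_of_sub_eq {s t : ℝ} (k : ℤ) (h : s - t = Real.pi + k * (2 * Real.pi)) :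
    cylCost (0, s) (0, t) = 0 :=
  cylCost_eq_zero rfl (Real.cos_eq_neg_one_iff.mpr ⟨k, h.symm⟩)

lemma integral_cylCost_le_of_ae_eq_zero {γ : Measure ((ℝ × ℝ) × (ℝ × ℝ))}
    (hγ : ∀ᵐ p ∂γ, cylCost p.1 p.2 = 0) (γ' : Measure ((ℝ × ℝ) × (ℝ × ℝ))) :
    ∫ p, cylCost p.1 p.2 ∂γ ≤ ∫ p, cylCost p.1 p.2 ∂γ' :=
  integral_le_integral_of_nonneg_of_ae_eq_zero (fun p => cylCost_nonneg p.1 p.2) hγ γ'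

theorem cylCost_optimal_plans_not_unique :
    ∃ γ γbar : Measure ((ℝ × ℝ) × (ℝ × ℝ)),
      γ ≠ γbar ∧ IsProbabilityMeasure γ ∧ IsProbabilityMeasure γbar ∧
      γ.map Prod.fst = γbar.map Prod.fst ∧ γ.map Prod.snd = γbar.map Prod.snd ∧
      (∀ γ' : Measure ((ℝ × ℝ) × (ℝ × ℝ)), IsProbabilityMeasure γ' →
        γ'.map Prod.fst = γ.map Prod.fst → γ'.map Prod.snd = γ.map Prod.snd →
        ∫ p, cylCost p.1 p.2 ∂γ ≤ ∫ p, cylCost p.1 p.2 ∂γ') ∧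
      (∀ γ' : Measure ((ℝ × ℝ) × (ℝ × ℝ)), IsProbabilityMeasure γ' →
        γ'.map Prod.fst = γbar.map Prod.fst → γ'.map Prod.snd = γbar.map Prod.snd →
        ∫ p, cylCost p.1 p.2 ∂γbar ≤ ∫ p, cylCost p.1 p.2 ∂γ') := by
  set π := Real.pi
  have hπ : 0 < π := Real.pi_pos
  let x₁ : ℝ × ℝ := (0, 0)
  let x₂ : ℝ × ℝ := (0, 2 * π)
  let y₁ : ℝ × ℝ := (0, π)
  let y₂ : ℝ × ℝ := (0, 3 * π)
  have h₁₁ : cylCost x₁ y₁ = 0 := cylCost_eq_zero_of_sub_eq (-1) (by push_cast; ring)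
  have h₂₂ : cylCost x₂ y₂ = 0 := cylCost_eq_zero_of_sub_eq (-1) (by push_cast; ring)
  have h₁₂ : cylCost x₁ y₂ = 0 := cylCost_eq_zero_of_sub_eq (-2) (by push_cast; ring)
  have h₂₁ : cylCost x₂ y₁ = 0 := cylCost_eq_zero_of_sub_eq 0 (by push_cast; ring)
  have hx : x₁ ≠ x₂ := fun h => by simp [x₁, x₂, hπ.ne'] at h
  have hy : y₁ ≠ y₂ := fun h => by simp only [y₁, y₂, Prod.mk.injEq, true_and] at h; linarith
  refine ⟨twoPointMeasure (x₁, y₁) (x₂, y₂), twoPointMeasure (x₁, y₂) (x₂, y₁),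
    twoPointMeasure_ne (fun h => hy (Prod.ext_iff.mp h).2) (fun h => hx (Prod.ext_iff.mp h).1),
    inferInstance, inferInstance, map_fst_twoPointMeasure_swap _ _ _ _,
    map_snd_twoPointMeasure_swap _ _ _ _, fun γ' _ _ _ => ?_, fun γ' _ _ _ => ?_⟩
  · exact integral_cylCost_le_of_ae_eq_zero (ae_twoPointMeasure h₁₁ h₂₂) γ'
  · exact integral_cylCost_le_of_ae_eq_zero (ae_twoPointMeasure h₁₂ h₂₁) γ'
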